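/- arXiv:2004.06852 — 6 statements merged into one kernel-verified Lean document; each statement's English description precedes it below -/
import Mathlib

section
/- Let f : I → ℝ be differentiable on the interval I and strongly η-convex with respect to η and modulus c ≥ 0. If x ∈ I is a global minimum of f on I, then for every y ∈ I with f'(x)·(y − x) ≥ 0 one has η(f(y), f(x)) ≥ c·(y − x)². -/
/-! Comparing the strong η-convexity inequality along the segment from `x` to `y` with the
minimality of `f x` gives `c (1 - t) (y - x)² ≤ η (f y) (f x)` for every `t ∈ (0, 1]`;
letting `t → 0⁺` yields the claim. -/

lemma le_of_forall_one_sub_mul_le {a b : ℝ} (h : ∀ t ∈ Set.Ioc (0 : ℝ) 1, (1 - t) * a ≤ b) :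
    a ≤ b := by
  have htend : Filter.Tendsto (fun t : ℝ => (1 - t) * a) (nhdsWithin 0 (Set.Ioi 0))
      (nhds ((1 - 0) * a)) :=
    ((continuous_const.sub continuous_id).mul continuous_const).continuousWithinAt
  rw [sub_zero, one_mul] at htend
  refine le_of_tendsto htend ?_
  filter_upwards [Ioc_mem_nhdsGT (zero_lt_one' ℝ)] with t ht using h t ht

lemma one_sub_mul_le_eta_of_isMinOn {I : Set ℝ} (hI : Convex ℝ I) (c : ℝ) (f : ℝ → ℝ)
    (η : ℝ → ℝ → ℝ) {x y : ℝ} (hx : x ∈ I) (hy : y ∈ I) (hmin : IsMinOn f I x)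
    (hf : ∀ t ∈ Set.Icc (0 : ℝ) 1,
      f (t * y + (1 - t) * x) ≤ f x + t * η (f y) (f x) - c * t * (1 - t) * (y - x) ^ 2)
    {t : ℝ} (ht : t ∈ Set.Ioc (0 : ℝ) 1) :
    (1 - t) * (c * (y - x) ^ 2) ≤ η (f y) (f x) := by
  obtain ⟨ht0, ht1⟩ := ht
  have hseg : t * y + (1 - t) * x ∈ I :=
    hI hy hx ht0.le (sub_nonneg.mpr ht1) (add_sub_cancel t 1)
  have hmul : t * ((1 - t) * (c * (y - x) ^ 2)) ≤ t * η (f y) (f x) := by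
    linarith [isMinOn_iff.mp hmin _ hseg, hf t ⟨ht0.le, ht1⟩]
  exact le_of_mul_le_mul_left hmul ht0

theorem stmt_5_general (I : Set ℝ) (hI : Convex ℝ I) (c : ℝ)
    (f f' : ℝ → ℝ) (η : ℝ → ℝ → ℝ)
    (hf : ∀ x ∈ I, ∀ y ∈ I, ∀ t ∈ Set.Icc (0:ℝ) 1,
      f (t * x + (1 - t) * y) ≤ f y + t * η (f x) (f y) - c * t * (1 - t) * (x - y)^2)
    (x : ℝ) (hx : x ∈ I) (hmin : ∀ y ∈ I, f x ≤ f y) :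
    ∀ y ∈ I, f' x * (y - x) ≥ 0 → η (f y) (f x) ≥ c * (y - x)^2 := fun y hy _ =>
  le_of_forall_one_sub_mul_le fun _ ht =>
    one_sub_mul_le_eta_of_isMinOn hI c f η hx hy (isMinOn_iff.mpr hmin) (hf y hy x hx) ht

theorem stmt_5 (I : Set ℝ) (hI : Convex ℝ I) (c : ℝ) (hc : 0 ≤ c)
    (f f' : ℝ → ℝ) (η : ℝ → ℝ → ℝ)
    (hdiff : ∀ x ∈ I, HasDerivAt f (f' x) x)
    (hf : ∀ x ∈ I, ∀ y ∈ I, ∀ t ∈ Set.Icc (0:ℝ) 1,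
      f (t * x + (1 - t) * y) ≤ f y + t * η (f x) (f y) - c * t * (1 - t) * (x - y)^2)
    (x : ℝ) (hx : x ∈ I) (hmin : ∀ y ∈ I, f x ≤ f y) :
    ∀ y ∈ I, f' x * (y - x) ≥ 0 → η (f y) (f x) ≥ c * (y - x)^2 :=
  stmt_5_general I hI c f f' η hf x hx hmin
end

section
/- Let f : I → ℝ be differentiable on the interval I and strongly η-convex with respect to η and modulus c ≥ 0. Then for all x, y ∈ I: f'(x)·(y − x) ≤ η(f(y), f(x)) − c·(y − x)². -/
/-! Along the segment `t ↦ x + t (y - x)`, strong η-convexity bounds the difference quotient of `f`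
at `x` by `η (f y) (f x) - c (1 - t) (y - x)²`; letting `t → 0⁺` gives the claim. -/

open Filter Topology Set

theorem le_of_hasDerivWithinAt_Ioi_of_slope_le {g u : ℝ → ℝ} {g' L a : ℝ}
    (hg : HasDerivWithinAt g g' (Ioi a) a) (hu : Tendsto u (𝓝[>] a) (𝓝 L))
    (hslope : ∀ᶠ t in 𝓝[>] a, slope g a t ≤ u t) : g' ≤ L :=
  le_of_tendsto_of_tendsto ((hasDerivWithinAt_iff_tendsto_slope' self_notMem_Ioi).1 hg) hu hslope

theorem slope_comp_lineMap_le {f : ℝ → ℝ} {x y e c t : ℝ}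
    (hconv : f (t * y + (1 - t) * x) ≤ f x + t * e - c * t * (1 - t) * (y - x) ^ 2)
    (ht : 0 < t) :
    slope (f ∘ AffineMap.lineMap x y) 0 t ≤ e - c * (1 - t) * (y - x) ^ 2 := by
  have hline : AffineMap.lineMap x y t = t * y + (1 - t) * x := by
    rw [AffineMap.lineMap_apply_ring']; ring
  rw [slope_def_field, Function.comp_apply, Function.comp_apply, AffineMap.lineMap_apply_zero,
    hline, sub_zero, div_le_iff₀ ht]
  linarith

theorem stmt_6_general (I : Set ℝ) (c : ℝ)
    (f f' : ℝ → ℝ) (η : ℝ → ℝ → ℝ)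
    (hdiff : ∀ x ∈ I, HasDerivAt f (f' x) x)
    (hf : ∀ x ∈ I, ∀ y ∈ I, ∀ t ∈ Set.Icc (0:ℝ) 1,
      f (t * x + (1 - t) * y) ≤ f y + t * η (f x) (f y) - c * t * (1 - t) * (x - y)^2) :
    ∀ x ∈ I, ∀ y ∈ I, f' x * (y - x) ≤ η (f y) (f x) - c * (y - x)^2 := by
  intro x hx y hy
  have hderiv : HasDerivWithinAt (f ∘ AffineMap.lineMap x y) (f' x * (y - x)) (Ioi 0) (0 : ℝ) := by
    have hfx : HasDerivAt f (f' x) (AffineMap.lineMap x y (0 : ℝ)) := by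
      rw [AffineMap.lineMap_apply_zero]; exact hdiff x hx
    exact hfx.comp_hasDerivWithinAt 0 AffineMap.hasDerivWithinAt_lineMap
  have hlim : Tendsto (fun t : ℝ ↦ η (f y) (f x) - c * (1 - t) * (y - x) ^ 2) (𝓝[>] 0)
      (𝓝 (η (f y) (f x) - c * (y - x) ^ 2)) := by
    have hcont : Continuous fun t : ℝ ↦ η (f y) (f x) - c * (1 - t) * (y - x) ^ 2 := by fun_prop
    simpa using (hcont.tendsto 0).mono_left nhdsWithin_le_nhds
  refine le_of_hasDerivWithinAt_Ioi_of_slope_le hderiv hlim ?_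
  filter_upwards [Ioc_mem_nhdsGT zero_lt_one] with t ht
  exact slope_comp_lineMap_le (hf y hy x hx t (Ioc_subset_Icc_self ht)) ht.1

theorem stmt_6 (I : Set ℝ) (hI : Convex ℝ I) (c : ℝ) (hc : 0 ≤ c)
    (f f' : ℝ → ℝ) (η : ℝ → ℝ → ℝ)
    (hdiff : ∀ x ∈ I, HasDerivAt f (f' x) x)
    (hf : ∀ x ∈ I, ∀ y ∈ I, ∀ t ∈ Set.Icc (0:ℝ) 1,
      f (t * x + (1 - t) * y) ≤ f y + t * η (f x) (f y) - c * t * (1 - t) * (x - y)^2) :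
    ∀ x ∈ I, ∀ y ∈ I, f' x * (y - x) ≤ η (f y) (f x) - c * (y - x)^2 :=
  stmt_6_general I c f f' η hdiff hf
end

section
/- Let a < b, c ≥ 0, and let f : [a,b] → ℝ be continuous and strongly η-convex with respect to η and modulus c. If η(u, v) ≤ M for all u, v ∈ f([a,b]), then f((a+b)/2) − M/2 ≤ (1/(b−a)) ∫_a^b f(x) dx − (c/12)·(b−a)². -/
/-! The point `m = (a + b) / 2` is the midpoint of `x` and its reflection
`a + b - x`, so strong η-convexity at `t = 1 / 2` gives
`f m ≤ f (a + b - x) + M / 2 - c (x - m)²` for every `x ∈ [a, b]`. Integrating over `[a, b]`,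
the reflection preserves `∫ f` and `∫ (x - m)² = (b - a)³ / 12`. -/

open Set MeasureTheory intervalIntegral

def StronglyEtaConvexOn (s : Set ℝ) (η : ℝ → ℝ → ℝ) (c : ℝ) (f : ℝ → ℝ) : Prop :=
  ∀ x ∈ s, ∀ y ∈ s, ∀ t ∈ Icc (0:ℝ) 1,
    f (t * x + (1 - t) * y) ≤ f y + t * η (f x) (f y) - c * t * (1 - t) * (x - y) ^ 2

theorem StronglyEtaConvexOn.map_midpoint_le {s : Set ℝ} {η : ℝ → ℝ → ℝ} {c : ℝ} {f : ℝ → ℝ}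
    (hf : StronglyEtaConvexOn s η c f) {x y : ℝ} (hx : x ∈ s) (hy : y ∈ s) :
    f ((x + y) / 2) ≤ f y + η (f x) (f y) / 2 - c / 4 * (x - y) ^ 2 := by
  have h := hf x hx y hy (1 / 2) ⟨by norm_num, by norm_num⟩
  convert h using 2 <;> ring

theorem integral_comp_add_sub_self (f : ℝ → ℝ) (a b : ℝ) :
    ∫ x in a..b, f (a + b - x) = ∫ x in a..b, f x := by
  simp [integral_comp_sub_left f (a + b)]

theorem integral_sub_midpoint_sq (a b : ℝ) :
    ∫ x in a..b, (x - (a + b) / 2) ^ 2 = (b - a) ^ 3 / 12 := by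
  rw [integral_comp_sub_right (fun x => x ^ 2), integral_pow]
  ring

theorem stmt_7_general (a b c M : ℝ) (hab : a < b)
    (f : ℝ → ℝ) (η : ℝ → ℝ → ℝ)
    (hcont : ContinuousOn f (Set.Icc a b))
    (hf : ∀ x ∈ Set.Icc a b, ∀ y ∈ Set.Icc a b, ∀ t ∈ Set.Icc (0:ℝ) 1,
      f (t * x + (1 - t) * y) ≤ f y + t * η (f x) (f y) - c * t * (1 - t) * (x - y)^2)
    (hM : ∀ u ∈ f '' Set.Icc a b, ∀ v ∈ f '' Set.Icc a b, η u v ≤ M) :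
    f ((a + b) / 2) - M / 2 ≤ (1 / (b - a)) * ∫ x in a..b, f x - (c / 12) * (b - a)^2 := by
  set m := (a + b) / 2
  have hrefl : MapsTo (fun x => a + b - x) (Icc a b) (Icc a b) :=
    fun x hx => ⟨by linarith [hx.2], by linarith [hx.1]⟩
  have hpoint : ∀ x ∈ Icc a b, f m ≤ f (a + b - x) + M / 2 - c * (x - m) ^ 2 := by
    intro x hx
    have hmid := StronglyEtaConvexOn.map_midpoint_le hf hx (hrefl hx)
    have hη := hM _ (mem_image_of_mem f hx) _ (mem_image_of_mem f (hrefl hx))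
    rw [show (x + (a + b - x)) / 2 = m by ring,
      show c / 4 * (x - (a + b - x)) ^ 2 = c * (x - m) ^ 2 by ring] at hmid
    linarith
  have hf_int : IntervalIntegrable f volume a b := hcont.intervalIntegrable_of_Icc hab.le
  have hrefl_int : IntervalIntegrable (fun x => f (a + b - x)) volume a b :=
    (hcont.comp (by fun_prop) hrefl).intervalIntegrable_of_Icc hab.le
  have hsq_int : IntervalIntegrable (fun x => c * (x - m) ^ 2) volume a b :=
    (by fun_prop : Continuous fun x => c * (x - m) ^ 2).intervalIntegrable a b
  have key : (b - a) * f m ≤ (∫ x in a..b, f x) + (b - a) * (M / 2) - c * ((b - a) ^ 3 / 12) :=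
    calc (b - a) * f m = ∫ _ in a..b, f m := by simp
      _ ≤ ∫ x in a..b, (f (a + b - x) + M / 2 - c * (x - m) ^ 2) :=
        integral_mono_on hab.le intervalIntegrable_const
          ((hrefl_int.add intervalIntegrable_const).sub hsq_int) hpoint
      _ = _ := by
        rw [integral_sub (hrefl_int.add intervalIntegrable_const) hsq_int,
          integral_add hrefl_int intervalIntegrable_const, intervalIntegral.integral_const_mul,
          integral_comp_add_sub_self, integral_sub_midpoint_sq, intervalIntegral.integral_const,
          smul_eq_mul]
  -- The integral in the goal extends over `- (c / 12) * (b - a)^2`.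
  rw [integral_sub hf_int intervalIntegrable_const, intervalIntegral.integral_const, smul_eq_mul,
    one_div, inv_mul_eq_div, le_div_iff₀ (sub_pos.mpr hab)]
  linear_combination key

theorem stmt_7 (a b c M : ℝ) (hab : a < b) (hc : 0 ≤ c)
    (f : ℝ → ℝ) (η : ℝ → ℝ → ℝ)
    (hcont : ContinuousOn f (Set.Icc a b))
    (hf : ∀ x ∈ Set.Icc a b, ∀ y ∈ Set.Icc a b, ∀ t ∈ Set.Icc (0:ℝ) 1,
      f (t * x + (1 - t) * y) ≤ f y + t * η (f x) (f y) - c * t * (1 - t) * (x - y)^2)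
    (hM : ∀ u ∈ f '' Set.Icc a b, ∀ v ∈ f '' Set.Icc a b, η u v ≤ M) :
    f ((a + b) / 2) - M / 2 ≤ (1 / (b - a)) * ∫ x in a..b, f x - (c / 12) * (b - a)^2 :=
  stmt_7_general a b c M hab f η hcont hf hM
end

section
/- Let a < b, c ≥ 0, and let f : [a,b] → ℝ be continuous and strongly η-convex with respect to η and modulus c. Then (1/(b−a)) ∫_a^b f(x) dx ≤ f(b) + (1/2)·η(f(a), f(b)) − (c/6)·(b−a)². -/
open intervalIntegral

theorem integral_unitInterval_affine_sub_bump (p q c d : ℝ) :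
    ∫ t in (0 : ℝ)..1, (p + t * q - c * t * (1 - t) * d) = p + q / 2 - c * d / 6 := by
  have hexpand : (fun t : ℝ => p + t * q - c * t * (1 - t) * d)
      = fun t => p + t * (q - c * d) + t ^ 2 * (c * d) := by
    funext t; ring
  have hint : ∀ g : ℝ → ℝ, Continuous g → IntervalIntegrable g MeasureTheory.volume 0 1 :=
    fun g hg => hg.intervalIntegrable 0 1
  rw [hexpand, integral_add (hint _ (by fun_prop)) (hint _ (by fun_prop)),
    integral_add (hint _ (by fun_prop)) (hint _ (by fun_prop)),
    integral_mul_const, integral_mul_const, integral_id, integral_pow, integral_const]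
  norm_num
  ring

theorem inv_sub_mul_integral_eq_integral_comp_segment (f : ℝ → ℝ) {a b : ℝ} (hab : a ≠ b) :
    (b - a)⁻¹ * ∫ x in a..b, f x = ∫ t in (0 : ℝ)..1, f (t * a + (1 - t) * b) := by
  have hsegment : ∀ t : ℝ, t * a + (1 - t) * b = (a - b) * t + b := fun t => by ring
  simp only [hsegment]
  rw [integral_comp_mul_add f (sub_ne_zero.mpr hab)]
  simp only [mul_zero, zero_add, mul_one, sub_add_cancel, smul_eq_mul]
  rw [integral_symm a b, ← neg_sub b a, inv_neg, neg_mul_neg]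

theorem stmt_8_general (a b c : ℝ) (hab : a < b)
    (f : ℝ → ℝ) (η : ℝ → ℝ → ℝ)
    (hcont : ContinuousOn f (Set.Icc a b))
    (hf : ∀ x ∈ Set.Icc a b, ∀ y ∈ Set.Icc a b, ∀ t ∈ Set.Icc (0:ℝ) 1,
      f (t * x + (1 - t) * y) ≤ f y + t * η (f x) (f y) - c * t * (1 - t) * (x - y)^2) :
    (1 / (b - a)) * ∫ x in a..b, f x ≤
      f b + (1 / 2) * η (f a) (f b) - (c / 6) * (b - a)^2 := by
  have ha : a ∈ Set.Icc a b := Set.left_mem_Icc.mpr hab.le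
  have hb : b ∈ Set.Icc a b := Set.right_mem_Icc.mpr hab.le
  have hsegment_cont : ContinuousOn (fun t => f (t * a + (1 - t) * b)) (Set.uIcc 0 1) := by
    refine hcont.comp (by fun_prop) fun t ht => ?_
    rw [Set.uIcc_of_le zero_le_one] at ht
    simpa using convex_Icc a b ha hb ht.1 (sub_nonneg.mpr ht.2) (by ring)
  rw [one_div, inv_sub_mul_integral_eq_integral_comp_segment f hab.ne]
  calc ∫ t in (0 : ℝ)..1, f (t * a + (1 - t) * b)
      ≤ ∫ t in (0 : ℝ)..1, (f b + t * η (f a) (f b) - c * t * (1 - t) * (a - b) ^ 2) :=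
        integral_mono_on zero_le_one hsegment_cont.intervalIntegrable
          (Continuous.intervalIntegrable (by fun_prop) _ _)
          fun t ht => hf a ha b hb t ht
    _ = f b + (1 / 2) * η (f a) (f b) - (c / 6) * (b - a) ^ 2 := by
        rw [integral_unitInterval_affine_sub_bump]; ring

theorem stmt_8 (a b c : ℝ) (hab : a < b) (hc : 0 ≤ c)
    (f : ℝ → ℝ) (η : ℝ → ℝ → ℝ)
    (hcont : ContinuousOn f (Set.Icc a b))
    (hf : ∀ x ∈ Set.Icc a b, ∀ y ∈ Set.Icc a b, ∀ t ∈ Set.Icc (0:ℝ) 1,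
      f (t * x + (1 - t) * y) ≤ f y + t * η (f x) (f y) - c * t * (1 - t) * (x - y)^2) :
    (1 / (b - a)) * ∫ x in a..b, f x ≤
      f b + (1 / 2) * η (f a) (f b) - (c / 6) * (b - a)^2 :=
  stmt_8_general a b c hab f η hcont hf
end

section
/- Let a < b, c ≥ 0, and let f : [a,b] → ℝ be continuous and strongly η-convex with respect to η and modulus c. If η(u, v) ≤ M for all u, v ∈ f([a,b]), then (1/(b−a)) ∫_a^b f(x) dx ≤ (f(a)+f(b))/2 + M/2 − (c/6)·(b−a)². -/
/-!
Writing `x = t a + (1 - t) b` and averaging the strong η-convexity inequalities for `(a, b, t)`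
and `(b, a, 1 - t)` gives the pointwise bound
`f x ≤ (f a + f b) / 2 + M / 2 - c (b - x) (x - a)` on `[a, b]`;
integrating it, with `∫ₐᵇ (b - x) (x - a) dx = (b - a)³ / 6`, yields the inequality.
-/

open Set intervalIntegral

def IsStronglyEtaConvexOn (s : Set ℝ) (f : ℝ → ℝ) (η : ℝ → ℝ → ℝ) (c : ℝ) : Prop :=
  ∀ x ∈ s, ∀ y ∈ s, ∀ t ∈ Icc (0:ℝ) 1,
    f (t * x + (1 - t) * y) ≤ f y + t * η (f x) (f y) - c * t * (1 - t) * (x - y) ^ 2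

namespace IsStronglyEtaConvexOn

variable {s : Set ℝ} {f : ℝ → ℝ} {η : ℝ → ℝ → ℝ} {c M : ℝ}

theorem apply_le_midpoint_add (hf : IsStronglyEtaConvexOn s f η c) {x y t : ℝ}
    (hx : x ∈ s) (hy : y ∈ s) (ht : t ∈ Icc (0:ℝ) 1)
    (hxy : η (f x) (f y) ≤ M) (hyx : η (f y) (f x) ≤ M) :
    f (t * x + (1 - t) * y) ≤ (f x + f y) / 2 + M / 2 - c * t * (1 - t) * (x - y) ^ 2 := by
  obtain ⟨ht0, ht1⟩ := ht
  have h₁ := hf x hx y hy t ⟨ht0, ht1⟩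
  have h₂ := hf y hy x hx (1 - t) ⟨by linarith, by linarith⟩
  rw [show (1 - t) * y + (1 - (1 - t)) * x = t * x + (1 - t) * y by ring] at h₂
  nlinarith [mul_le_mul_of_nonneg_left hxy ht0, mul_le_mul_of_nonneg_left hyx (sub_nonneg.2 ht1)]

theorem le_of_mem_Icc {a b : ℝ} (hf : IsStronglyEtaConvexOn (Icc a b) f η c) (hab : a < b)
    (hM₁ : η (f a) (f b) ≤ M) (hM₂ : η (f b) (f a) ≤ M) (x : ℝ) (hx : x ∈ Icc a b) :
    f x ≤ (f a + f b) / 2 + M / 2 - c * ((b - x) * (x - a)) := by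
  have hba : b - a ≠ 0 := (sub_pos.2 hab).ne'
  set t := (b - x) / (b - a)
  have ht : t ∈ Icc (0:ℝ) 1 := ⟨div_nonneg (by linarith [hx.2]) (by linarith),
    (div_le_one (by linarith)).2 (by linarith [hx.1])⟩
  have hxt : t * a + (1 - t) * b = x := by
    simp only [t]; field_simp; ring
  have hprod : c * t * (1 - t) * (a - b) ^ 2 = c * ((b - x) * (x - a)) := by
    simp only [t]; field_simp; ring
  have key := hf.apply_le_midpoint_add (left_mem_Icc.2 hab.le) (right_mem_Icc.2 hab.le) ht hM₁ hM₂
  rwa [hxt, hprod] at key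

end IsStronglyEtaConvexOn

theorem integral_sub_mul_sub (a b : ℝ) : ∫ x in a..b, (b - x) * (x - a) = (b - a) ^ 3 / 6 := by
  have : (fun x : ℝ => (b - x) * (x - a)) = fun x => -x ^ 2 + (a + b) * x - a * b := by
    funext x; ring
  rw [this, integral_sub, integral_add, integral_neg, integral_pow, integral_const_mul,
    integral_id, integral_const]
  · simp only [smul_eq_mul]; ring
  all_goals exact Continuous.intervalIntegrable (by fun_prop) a b

theorem stmt_10_general (a b c M : ℝ) (hab : a < b)
    (f : ℝ → ℝ) (η : ℝ → ℝ → ℝ)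
    (hcont : ContinuousOn f (Set.Icc a b))
    (hf : ∀ x ∈ Set.Icc a b, ∀ y ∈ Set.Icc a b, ∀ t ∈ Set.Icc (0:ℝ) 1,
      f (t * x + (1 - t) * y) ≤ f y + t * η (f x) (f y) - c * t * (1 - t) * (x - y)^2)
    (hM : ∀ u ∈ f '' Set.Icc a b, ∀ v ∈ f '' Set.Icc a b, η u v ≤ M) :
    (1 / (b - a)) * ∫ x in a..b, f x ≤
      (f a + f b) / 2 + M / 2 - (c / 6) * (b - a)^2 := by
  have ha : f a ∈ f '' Icc a b := mem_image_of_mem f (left_mem_Icc.2 hab.le)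
  have hb : f b ∈ f '' Icc a b := mem_image_of_mem f (right_mem_Icc.2 hab.le)
  have hpt := IsStronglyEtaConvexOn.le_of_mem_Icc hf hab (hM _ ha _ hb) (hM _ hb _ ha)
  have hbound : ∫ x in a..b, f x ≤
      ∫ x in a..b, ((f a + f b) / 2 + M / 2 - c * ((b - x) * (x - a))) :=
    integral_mono_on hab.le (hcont.intervalIntegrable_of_Icc hab.le)
    (Continuous.intervalIntegrable (by fun_prop) a b) hpt
  rw [integral_sub, integral_const, integral_const_mul, integral_sub_mul_sub, smul_eq_mul]
    at hbound
  · rw [one_div, inv_mul_le_iff₀ (sub_pos.2 hab)]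
    linarith
  all_goals exact Continuous.intervalIntegrable (by fun_prop) a b

theorem stmt_10 (a b c M : ℝ) (hab : a < b) (hc : 0 ≤ c)
    (f : ℝ → ℝ) (η : ℝ → ℝ → ℝ)
    (hcont : ContinuousOn f (Set.Icc a b))
    (hf : ∀ x ∈ Set.Icc a b, ∀ y ∈ Set.Icc a b, ∀ t ∈ Set.Icc (0:ℝ) 1,
      f (t * x + (1 - t) * y) ≤ f y + t * η (f x) (f y) - c * t * (1 - t) * (x - y)^2)
    (hM : ∀ u ∈ f '' Set.Icc a b, ∀ v ∈ f '' Set.Icc a b, η u v ≤ M) :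
    (1 / (b - a)) * ∫ x in a..b, f x ≤
      (f a + f b) / 2 + M / 2 - (c / 6) * (b - a)^2 :=
  stmt_10_general a b c M hab f η hcont hf hM
end

section
/- Let a < b, c ≥ 0, let f : [a,b] → ℝ be continuous and strongly η-convex with respect to η and modulus c, and let w : [a,b] → ℝ be continuous, nonnegative, and symmetric with respect to (a+b)/2. Then f((a+b)/2)·∫_a^b w(x) dx − (1/2)·∫_a^b η(f(a+b−x), f(x))·w(x) dx + (c/4)·∫_a^b (a+b−2x)²·w(x) dx ≤ ∫_a^b f(x)·w(x) dx. -/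
/-!
Taking `t = 1/2` in the strong η-convexity inequality for the pair `(a + b - x, x)`, whose
midpoint is `(a + b) / 2` for every `x`, gives a pointwise bound for `f ((a + b) / 2)`.
Multiplying by the nonnegative weight `w x` and integrating over `[a, b]` yields the inequality.
-/

open Set MeasureTheory

def StrongEtaConvexOn (s : Set ℝ) (η : ℝ → ℝ → ℝ) (c : ℝ) (f : ℝ → ℝ) : Prop :=
  ∀ x ∈ s, ∀ y ∈ s, ∀ t ∈ Icc (0 : ℝ) 1,
    f (t * x + (1 - t) * y) ≤ f y + t * η (f x) (f y) - c * t * (1 - t) * (x - y) ^ 2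

lemma mapsTo_const_add_sub_Icc (a b : ℝ) : MapsTo (fun x => a + b - x) (Icc a b) (Icc a b) :=
  fun _ hx => ⟨by linarith [hx.2], by linarith [hx.1]⟩

namespace StrongEtaConvexOn

variable {a b c x : ℝ} {η : ℝ → ℝ → ℝ} {f : ℝ → ℝ}

lemma midpoint_add_le (hf : StrongEtaConvexOn (Icc a b) η c f) (hx : x ∈ Icc a b) :
    f ((a + b) / 2) + c / 4 * (a + b - 2 * x) ^ 2 ≤ f x + 1 / 2 * η (f (a + b - x)) (f x) := by
  have h := hf (a + b - x) (mapsTo_const_add_sub_Icc a b hx) x hx (1 / 2)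
    ⟨by norm_num, by norm_num⟩
  have hmid : 1 / 2 * (a + b - x) + (1 - 1 / 2) * x = (a + b) / 2 := by ring
  have hsq : c * (1 / 2) * (1 - 1 / 2) * (a + b - x - x) ^ 2 = c / 4 * (a + b - 2 * x) ^ 2 := by
    ring
  rw [hmid, hsq] at h
  linarith

lemma midpoint_mul_weight_le (hf : StrongEtaConvexOn (Icc a b) η c f) (hx : x ∈ Icc a b)
    {w : ℝ} (hw : 0 ≤ w) :
    f ((a + b) / 2) * w - 1 / 2 * (η (f (a + b - x)) (f x) * w)
      + c / 4 * ((a + b - 2 * x) ^ 2 * w) ≤ f x * w :=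
  calc _ = (f ((a + b) / 2) + c / 4 * (a + b - 2 * x) ^ 2
        - 1 / 2 * η (f (a + b - x)) (f x)) * w := by ring
    _ ≤ f x * w := mul_le_mul_of_nonneg_right (by linarith [hf.midpoint_add_le hx]) hw

end StrongEtaConvexOn

theorem stmt_13_general (a b c : ℝ) (hab : a < b)
    (f w : ℝ → ℝ) (η : ℝ → ℝ → ℝ)
    (hfc : ContinuousOn f (Set.Icc a b))
    (hηc : Continuous fun p : ℝ × ℝ => η p.1 p.2)
    (hf : ∀ x ∈ Set.Icc a b, ∀ y ∈ Set.Icc a b, ∀ t ∈ Set.Icc (0:ℝ) 1,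
      f (t * x + (1 - t) * y) ≤ f y + t * η (f x) (f y) - c * t * (1 - t) * (x - y)^2)
    (hwc : ContinuousOn w (Set.Icc a b))
    (hwnn : ∀ x ∈ Set.Icc a b, 0 ≤ w x) :
    f ((a + b) / 2) * (∫ x in a..b, w x)
      - (1 / 2) * (∫ x in a..b, η (f (a + b - x)) (f x) * w x)
      + (c / 4) * ∫ x in a..b, (a + b - 2 * x)^2 * w x
    ≤ ∫ x in a..b, f x * w x := by
  have hI {g : ℝ → ℝ} (hg : ContinuousOn g (Icc a b)) : IntervalIntegrable g volume a b :=
    hg.intervalIntegrable_of_Icc hab.le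
  have hfr : ContinuousOn (fun x => f (a + b - x)) (Icc a b) :=
    hfc.comp (by fun_prop) (mapsTo_const_add_sub_Icc a b)
  have hw := hI hwc
  have hη : IntervalIntegrable (fun x => η (f (a + b - x)) (f x) * w x) volume a b :=
    hI ((hηc.comp_continuousOn (hfr.prodMk hfc)).mul hwc)
  have hq : IntervalIntegrable (fun x => (a + b - 2 * x) ^ 2 * w x) volume a b :=
    hI ((by fun_prop : ContinuousOn (fun x => (a + b - 2 * x) ^ 2) (Icc a b)).mul hwc)
  have hsub := (hw.const_mul (f ((a + b) / 2))).sub (hη.const_mul (1 / 2))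
  calc _ = ∫ x in a..b, (f ((a + b) / 2) * w x - 1 / 2 * (η (f (a + b - x)) (f x) * w x)
          + c / 4 * ((a + b - 2 * x) ^ 2 * w x)) := by
        rw [intervalIntegral.integral_add hsub (hq.const_mul _),
          intervalIntegral.integral_sub (hw.const_mul _) (hη.const_mul _)]
        simp only [intervalIntegral.integral_const_mul]
    _ ≤ ∫ x in a..b, f x * w x :=
        intervalIntegral.integral_mono_on hab.le (hsub.add (hq.const_mul _)) (hI (hfc.mul hwc))
          fun x hx => StrongEtaConvexOn.midpoint_mul_weight_le hf hx (hwnn x hx)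

theorem stmt_13 (a b c : ℝ) (hab : a < b) (hc : 0 ≤ c)
    (f w : ℝ → ℝ) (η : ℝ → ℝ → ℝ)
    (hfc : ContinuousOn f (Set.Icc a b))
    (hηc : Continuous fun p : ℝ × ℝ => η p.1 p.2)
    (hf : ∀ x ∈ Set.Icc a b, ∀ y ∈ Set.Icc a b, ∀ t ∈ Set.Icc (0:ℝ) 1,
      f (t * x + (1 - t) * y) ≤ f y + t * η (f x) (f y) - c * t * (1 - t) * (x - y)^2)
    (hwc : ContinuousOn w (Set.Icc a b))
    (hwnn : ∀ x ∈ Set.Icc a b, 0 ≤ w x)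
    (hwsym : ∀ x ∈ Set.Icc a b, w x = w (a + b - x)) :
    f ((a + b) / 2) * (∫ x in a..b, w x)
      - (1 / 2) * (∫ x in a..b, η (f (a + b - x)) (f x) * w x)
      + (c / 4) * ∫ x in a..b, (a + b - 2 * x)^2 * w x
    ≤ ∫ x in a..b, f x * w x :=
  stmt_13_general a b c hab f w η hfc hηc hf hwc hwnn
end
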